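/- arXiv:2006.02787 — 4 statements merged into one kernel-verified Lean document; each statement's English description precedes it below -/
import Mathlib

section
/- Let X be a Banach space and σ > 0. For a continuous path ω : ℝ → X with ω(0) = 0 define the Wiener shift (θ_s ω)(r) := ω(s+r) − ω(s). Suppose: (1) V assigns to each t ≥ 0 and each continuous path ω with ω(0)=0 a bounded linear operator V(t,ω) on X, with V(0,ω) = Id and V(t+s, ω) = V(t, θ_s ω) ∘ V(s, ω) for all t,s ≥ 0 and all such paths ω; (2) G assigns to each such path ω an additive (ℝ-linear, possibly unbounded) map G(ω) : X → X such that for every path ω, every x ∈ X and all 0 ≤ r ≤ t the function s ↦ V(t−s, θ_s ω)(G(θ_s ω)x) is Bochner integrable on [r,t] with ∫_r^t V(t−s, θ_s ω)(G(θ_s ω)x) ds = V(t−r, θ_r ω)x − x; (3) F : X → X is continuous; and all integrands appearing below are Bochner integrable. Fix a continuous path ω with ω(0)=0 and u₀ ∈ X, and suppose u : [0,∞) → X is continuous and satisfies for all t ≥ 0: u(t) = V(t,ω)u₀ + ∫₀ᵗ V(t−s, θ_s ω)(F(u(s))) ds + σ ω(t) + σ ∫₀ᵗ V(t−s, θ_s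 ω)(G(θ_s ω)(ω(s))) ds. Then for every s ≥ 0 the function w(t) := u(t+s) satisfies, for all t ≥ 0, w(t) = V(t, θ_s ω)(u(s)) + ∫₀ᵗ V(t−r, θ_r(θ_s ω))(F(w(r))) dr + σ (θ_s ω)(t) + σ ∫₀ᵗ V(t−r, θ_r(θ_s ω))(G(θ_r(θ_s ω))((θ_s ω)(r))) dr. In other words, the pathwise mild solution operator φ(t,ω,u₀) := u(t) satisfies the cocycle property φ(t+s, ω, u₀) = φ(t, θ_s ω, φ(s, ω, u₀)). -/
open MeasureTheory

/-- The Wiener shift on paths: `(θ_s ω)(r) = ω(s+r) - ω(s)`. -/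
def wShift {X : Type*} [NormedAddCommGroup X] (s : ℝ) (ω : ℝ → X) : ℝ → X :=
  fun r => ω (s + r) - ω s

lemma wShift_cont {X : Type*} [NormedAddCommGroup X] {ω : ℝ → X} (hω : Continuous ω)
    (s : ℝ) : Continuous (wShift s ω) :=
  (hω.comp (continuous_const.add continuous_id)).sub continuous_const

lemma wShift_zero {X : Type*} [NormedAddCommGroup X] (ω : ℝ → X) (s : ℝ) :
    wShift s ω 0 = 0 := by simp [wShift]

lemma wShift_wShift {X : Type*} [NormedAddCommGroup X] (ω : ℝ → X) (s r : ℝ) :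
    wShift r (wShift s ω) = wShift (s + r) ω := by
  funext x; simp only [wShift, ← add_assoc]; abel

lemma wShift_zero_eq {X : Type*} [NormedAddCommGroup X] {ω : ℝ → X} (hω0 : ω 0 = 0) :
    wShift 0 ω = ω := by funext x; simp [wShift, hω0]

/-- the pathwise mild solution operator satisfies the cocycle
property `φ(t+s,ω,u₀) = φ(t,θ_s ω, φ(s,ω,u₀))`. -/
theorem stmt2
    {X : Type*} [NormedAddCommGroup X] [NormedSpace ℝ X] [CompleteSpace X]
    (σ : ℝ) (hσ : 0 < σ)
    (V : ℝ → (ℝ → X) → X →L[ℝ] X)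
    (G : (ℝ → X) → X →ₗ[ℝ] X)
    (hV0 : ∀ ω : ℝ → X, Continuous ω → ω 0 = 0 →
      V 0 ω = ContinuousLinearMap.id ℝ X)
    (hVcoc : ∀ ω : ℝ → X, Continuous ω → ω 0 = 0 → ∀ t s : ℝ, 0 ≤ t → 0 ≤ s →
      V (t + s) ω = (V t (wShift s ω)).comp (V s ω))
    (hG : ∀ ω : ℝ → X, Continuous ω → ω 0 = 0 → ∀ x : X, ∀ r t : ℝ,
      0 ≤ r → r ≤ t →
      IntegrableOn (fun s => V (t - s) (wShift s ω) (G (wShift s ω) x))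
        (Set.Icc r t) ∧
      (∫ s in r..t, V (t - s) (wShift s ω) (G (wShift s ω) x)) =
        V (t - r) (wShift r ω) x - x)
    (F : X → X) (hF : Continuous F)
    (ω : ℝ → X) (hω : Continuous ω) (hω0 : ω 0 = 0)
    (u₀ : X) (u : ℝ → X) (hu : ContinuousOn u (Set.Ici 0))
    (hIntF : ∀ t : ℝ, 0 ≤ t →
      IntegrableOn (fun s => V (t - s) (wShift s ω) (F (u s))) (Set.Icc 0 t))
    (hIntG : ∀ t : ℝ, 0 ≤ t →
      IntegrableOn (fun s => V (t - s) (wShift s ω) (G (wShift s ω) (ω s)))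
        (Set.Icc 0 t))
    (hIntF' : ∀ s : ℝ, 0 ≤ s → ∀ t : ℝ, 0 ≤ t →
      IntegrableOn (fun r => V (t - r) (wShift r (wShift s ω)) (F (u (r + s))))
        (Set.Icc 0 t))
    (hIntG' : ∀ s : ℝ, 0 ≤ s → ∀ t : ℝ, 0 ≤ t →
      IntegrableOn (fun r => V (t - r) (wShift r (wShift s ω))
        (G (wShift r (wShift s ω)) (wShift s ω r))) (Set.Icc 0 t))
    (hueq : ∀ t : ℝ, 0 ≤ t →
      u t = V t ω u₀ + (∫ s in (0:ℝ)..t, V (t - s) (wShift s ω) (F (u s)))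
        + σ • ω t
        + σ • ∫ s in (0:ℝ)..t, V (t - s) (wShift s ω) (G (wShift s ω) (ω s))) :
    ∀ s : ℝ, 0 ≤ s → ∀ t : ℝ, 0 ≤ t →
      u (t + s) = V t (wShift s ω) (u s)
        + (∫ r in (0:ℝ)..t, V (t - r) (wShift r (wShift s ω)) (F (u (r + s))))
        + σ • (wShift s ω) t
        + σ • ∫ r in (0:ℝ)..t, V (t - r) (wShift r (wShift s ω))
            (G (wShift r (wShift s ω)) ((wShift s ω) r)) := by
  intro s hs t ht
  have hω'c : Continuous (wShift s ω) := wShift_cont hω s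
  have hω'0 : wShift s ω 0 = 0 := wShift_zero ω s
  have hts : (0:ℝ) ≤ t + s := by linarith
  have huIcc0s : Set.uIcc (0:ℝ) s = Set.Icc 0 s := Set.uIcc_of_le hs
  have huIcc0t : Set.uIcc (0:ℝ) t = Set.Icc 0 t := Set.uIcc_of_le ht
  -- cocycle of V
  have h4 : V (t + s) ω = (V t (wShift s ω)).comp (V s ω) := hVcoc ω hω hω0 t s ht hs
  -- additivity of the shifted path
  have h3 : ω (t + s) = wShift s ω t + ω s := by
    rw [add_comm t s]; simp only [wShift]; abel
  ---- The F integral ----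
  have hIFfull := hIntF (t + s) hts
  have hIF1 : IntervalIntegrable (fun r => V (t + s - r) (wShift r ω) (F (u r)))
      volume 0 s :=
    (hIFfull.mono_set (by rw [huIcc0s]; exact Set.Icc_subset_Icc_right (by linarith))).intervalIntegrable
  have hIF2 : IntervalIntegrable (fun r => V (t + s - r) (wShift r ω) (F (u r)))
      volume s (t + s) :=
    (hIFfull.mono_set (by rw [Set.uIcc_of_le (by linarith : s ≤ t + s)]; exact Set.Icc_subset_Icc_left hs)).intervalIntegrable
  have hsplitF : (∫ r in (0:ℝ)..(t + s), V (t + s - r) (wShift r ω) (F (u r)))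
      = (∫ r in (0:ℝ)..s, V (t + s - r) (wShift r ω) (F (u r)))
        + ∫ r in s..(t + s), V (t + s - r) (wShift r ω) (F (u r)) :=
    (intervalIntegral.integral_add_adjacent_intervals hIF1 hIF2).symm
  have hIF1' : IntervalIntegrable (fun r => V (s - r) (wShift r ω) (F (u r)))
      volume 0 s :=
    ((hIntF s hs).mono_set huIcc0s.subset).intervalIntegrable
  have hp1 : (∫ r in (0:ℝ)..s, V (t + s - r) (wShift r ω) (F (u r)))
      = V t (wShift s ω) (∫ r in (0:ℝ)..s, V (s - r) (wShift r ω) (F (u r))) := by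
    rw [← ContinuousLinearMap.intervalIntegral_comp_comm _ hIF1']
    apply intervalIntegral.integral_congr
    intro r hr
    rw [huIcc0s] at hr
    show V (t + s - r) (wShift r ω) (F (u r))
      = V t (wShift s ω) (V (s - r) (wShift r ω) (F (u r)))
    have e : t + s - r = t + (s - r) := by ring
    rw [e, hVcoc (wShift r ω) (wShift_cont hω r) (wShift_zero ω r) t (s - r) ht
        (by linarith [hr.2]), wShift_wShift]
    have e2 : r + (s - r) = s := by ring
    rw [e2]
    rfl
  have hp2 : (∫ r in s..(t + s), V (t + s - r) (wShift r ω) (F (u r)))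
      = ∫ r in (0:ℝ)..t, V (t - r) (wShift r (wShift s ω)) (F (u (r + s))) := by
    have hcv := intervalIntegral.integral_comp_add_right (a := (0:ℝ)) (b := t)
      (fun x => V (t + s - x) (wShift x ω) (F (u x))) s
    rw [zero_add] at hcv
    rw [← hcv]
    apply intervalIntegral.integral_congr
    intro r _
    show V (t + s - (r + s)) (wShift (r + s) ω) (F (u (r + s)))
      = V (t - r) (wShift r (wShift s ω)) (F (u (r + s)))
    rw [wShift_wShift]
    have e1 : t + s - (r + s) = t - r := by ring
    have e2 : s + r = r + s := add_comm s r
    rw [e1, e2]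
  ---- The G integral ----
  have hIGfull := hIntG (t + s) hts
  have hIG1 : IntervalIntegrable
      (fun r => V (t + s - r) (wShift r ω) (G (wShift r ω) (ω r))) volume 0 s :=
    (hIGfull.mono_set (by rw [huIcc0s]; exact Set.Icc_subset_Icc_right (by linarith))).intervalIntegrable
  have hIG2 : IntervalIntegrable
      (fun r => V (t + s - r) (wShift r ω) (G (wShift r ω) (ω r))) volume s (t + s) :=
    (hIGfull.mono_set (by rw [Set.uIcc_of_le (by linarith : s ≤ t + s)]; exact Set.Icc_subset_Icc_left hs)).intervalIntegrable
  have hsplitG : (∫ r in (0:ℝ)..(t + s), V (t + s - r) (wShift r ω) (G (wShift r ω) (ω r)))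
      = (∫ r in (0:ℝ)..s, V (t + s - r) (wShift r ω) (G (wShift r ω) (ω r)))
        + ∫ r in s..(t + s), V (t + s - r) (wShift r ω) (G (wShift r ω) (ω r)) :=
    (intervalIntegral.integral_add_adjacent_intervals hIG1 hIG2).symm
  have hIG1' : IntervalIntegrable (fun r => V (s - r) (wShift r ω) (G (wShift r ω) (ω r)))
      volume 0 s :=
    ((hIntG s hs).mono_set huIcc0s.subset).intervalIntegrable
  have hp1G : (∫ r in (0:ℝ)..s, V (t + s - r) (wShift r ω) (G (wShift r ω) (ω r)))
      = V t (wShift s ω)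
          (∫ r in (0:ℝ)..s, V (s - r) (wShift r ω) (G (wShift r ω) (ω r))) := by
    rw [← ContinuousLinearMap.intervalIntegral_comp_comm _ hIG1']
    apply intervalIntegral.integral_congr
    intro r hr
    rw [huIcc0s] at hr
    show V (t + s - r) (wShift r ω) (G (wShift r ω) (ω r))
      = V t (wShift s ω) (V (s - r) (wShift r ω) (G (wShift r ω) (ω r)))
    have e : t + s - r = t + (s - r) := by ring
    rw [e, hVcoc (wShift r ω) (wShift_cont hω r) (wShift_zero ω r) t (s - r) ht
        (by linarith [hr.2]), wShift_wShift]
    have e2 : r + (s - r) = s := by ring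
    rw [e2]
    rfl
  have hB : IntervalIntegrable (fun r => V (t - r) (wShift r (wShift s ω))
      (G (wShift r (wShift s ω)) (wShift s ω r))) volume 0 t :=
    ((hIntG' s hs t ht).mono_set huIcc0t.subset).intervalIntegrable
  have hC : IntervalIntegrable (fun r => V (t - r) (wShift r (wShift s ω))
      (G (wShift r (wShift s ω)) (ω s))) volume 0 t :=
    (((hG (wShift s ω) hω'c hω'0 (ω s) 0 t le_rfl ht).1).mono_set
      huIcc0t.subset).intervalIntegrable
  have hp2G : (∫ r in s..(t + s), V (t + s - r) (wShift r ω) (G (wShift r ω) (ω r)))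
      = (∫ r in (0:ℝ)..t, V (t - r) (wShift r (wShift s ω))
          (G (wShift r (wShift s ω)) (wShift s ω r)))
        + (V t (wShift s ω) (ω s) - ω s) := by
    have hcv := intervalIntegral.integral_comp_add_right (a := (0:ℝ)) (b := t)
      (fun x => V (t + s - x) (wShift x ω) (G (wShift x ω) (ω x))) s
    rw [zero_add] at hcv
    have hstep : (∫ r in s..(t + s), V (t + s - r) (wShift r ω) (G (wShift r ω) (ω r)))
        = ∫ r in (0:ℝ)..t, V (t - r) (wShift r (wShift s ω))
            (G (wShift r (wShift s ω)) (ω (r + s))) := by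
      rw [← hcv]
      apply intervalIntegral.integral_congr
      intro r _
      show V (t + s - (r + s)) (wShift (r + s) ω) (G (wShift (r + s) ω) (ω (r + s)))
        = V (t - r) (wShift r (wShift s ω)) (G (wShift r (wShift s ω)) (ω (r + s)))
      rw [wShift_wShift]
      have e1 : t + s - (r + s) = t - r := by ring
      have e2 : s + r = r + s := add_comm s r
      rw [e1, e2]
    rw [hstep]
    have hdec : ∀ r : ℝ, V (t - r) (wShift r (wShift s ω))
        (G (wShift r (wShift s ω)) (ω (r + s)))
        = V (t - r) (wShift r (wShift s ω)) (G (wShift r (wShift s ω)) (wShift s ω r))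
          + V (t - r) (wShift r (wShift s ω)) (G (wShift r (wShift s ω)) (ω s)) := by
      intro r
      have hx : ω (r + s) = wShift s ω r + ω s := by
        rw [add_comm r s]; simp only [wShift]; abel
      rw [hx, map_add, map_add]
    simp only [hdec]
    rw [intervalIntegral.integral_add hB hC,
      (hG (wShift s ω) hω'c hω'0 (ω s) 0 t le_rfl ht).2, wShift_zero_eq hω'0, sub_zero]
  ---- assemble ----
  rw [hueq (t + s) hts, hueq s hs, h4, hsplitF, hp1, hp2, hsplitG, hp1G, hp2G, h3]
  simp only [ContinuousLinearMap.coe_comp', Function.comp_apply, map_add,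
    ContinuousLinearMap.map_smul, smul_add, smul_sub, map_sub]
  abel
end

section
/- Let λ > a > 0, c > 0, ĉ > 0, σ > 0, C̄ > 0, C̃ > 0, β ∈ (0,1], u₀ ≥ 0, and let h : (−∞,0] → [0,∞) be continuous such that s ↦ exp(a·s)h(s) and s ↦ exp(λs)(−s)^{β−1}h(s) are integrable on (−∞,0). Define γ(t) := c·exp(−λt)·u₀ + σĉ·exp(−λt)·h(−t) + c·C̄/λ + σC̃ ∫_{−t}^{0} exp(λr)(−r)^{β−1} h(r) dr for t ≥ 0. Then for every t ≥ 0: γ(t) + a ∫₀ᵗ exp(−(λ−a)(t−s)) γ(s) ds ≤ exp(−(λ−a)t)·(2c·u₀ + σĉ·h(−t)) + c·C̄/(λ−a) + a·σĉ ∫_{−∞}^{0} exp(a·s) h(s) ds + (σC̃λ/(λ−a)) ∫_{−∞}^{0} exp(λs)(−s)^{β−1} h(s) ds. -/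
/-!
Let `D = c C̄ / λ + σ C̃ J₂`, with `J₁, J₂` the two tail integrals over `(-∞, 0)`. The partial
integral in `γ` is at most `J₂`, so `γ s ≤ e^{-λs} (c u₀ + σ ĉ h(-s)) + D`. Since
`e^{-(λ-a)(t-s)} e^{-λs} = e^{-(λ-a)t} e^{-as}`, the convolution splits into `a ∫₀ᵗ e^{-as} ≤ 1`,
`a ∫₀ᵗ e^{-(λ-a)(t-s)} ≤ a / (λ-a)` and `∫₀ᵗ e^{-as} h(-s) ds`, which the substitution `r = -s`
turns into a partial tail integral, at most `J₁`. Finally `D + a D / (λ-a) = λ D / (λ-a)`.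
-/

open MeasureTheory Set Real

lemma mul_integral_exp_neg_mul_le_one {k : ℝ} (hk : 0 < k) (t : ℝ) :
    k * ∫ s in (0:ℝ)..t, exp (-k * s) ≤ 1 := by
  rw [intervalIntegral.integral_comp_mul_left exp (neg_ne_zero.2 hk.ne'), integral_exp,
    smul_eq_mul, mul_zero, exp_zero]
  field_simp
  linarith [exp_pos (-(k * t))]

lemma integral_exp_neg_mul_sub_le {k : ℝ} (hk : 0 < k) (t : ℝ) :
    ∫ s in (0:ℝ)..t, exp (-k * (t - s)) ≤ 1 / k := by
  have hrefl := intervalIntegral.integral_comp_sub_left (fun s => exp (-k * s)) t (a := 0) (b := t)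
  rw [sub_self, sub_zero] at hrefl
  rw [hrefl, le_div_iff₀ hk, mul_comm]
  exact mul_integral_exp_neg_mul_le_one hk t

lemma intervalIntegral_mem_Icc_setIntegral_Iio {f : ℝ → ℝ} {a b : ℝ} (hab : a ≤ b)
    (hf : IntegrableOn f (Iio b)) (hf0 : ∀ x ≤ b, 0 ≤ f x) :
    ∫ x in a..b, f x ∈ Icc 0 (∫ x in Iio b, f x) := by
  refine ⟨intervalIntegral.integral_nonneg hab fun x hx => hf0 x hx.2, ?_⟩
  rw [intervalIntegral.integral_of_le hab, integral_Ioc_eq_integral_Ioo]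
  exact setIntegral_mono_set hf
    (ae_restrict_of_forall_mem measurableSet_Iio fun x hx => hf0 x hx.le)
    Ioo_subset_Iio_self.eventuallyLE

section ReflectedWeight

variable {a t : ℝ} {f : ℝ → ℝ}

lemma intervalIntegrable_exp_neg_mul_comp_neg (ht : 0 ≤ t)
    (hf : IntegrableOn (fun r => exp (a * r) * f r) (Iio 0)) :
    IntervalIntegrable (fun s => exp (-a * s) * f (-s)) volume 0 t := by
  have hf' : IntervalIntegrable (fun r => exp (a * r) * f r) volume (-t) 0 :=
    (intervalIntegrable_iff_integrableOn_Ioc_of_le (by linarith)).2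
      ((hf.congr_set_ae Iio_ae_eq_Iic.symm).mono_set fun r hr => hr.2)
  simpa only [neg_neg, neg_zero, mul_neg, neg_mul] using
    ((IntervalIntegrable.iff_comp_neg (by finiteness)).1 hf').symm

lemma integral_exp_neg_mul_comp_neg_le (ht : 0 ≤ t)
    (hf : IntegrableOn (fun r => exp (a * r) * f r) (Iio 0)) (hf0 : ∀ r ≤ 0, 0 ≤ f r) :
    ∫ s in (0:ℝ)..t, exp (-a * s) * f (-s) ≤ ∫ r in Iio 0, exp (a * r) * f r := by
  have hsubst := intervalIntegral.integral_comp_neg (a := 0) (b := t) fun r => exp (a * r) * f r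
  simp only [neg_zero, mul_neg, neg_mul] at hsubst ⊢
  rw [hsubst]
  exact (intervalIntegral_mem_Icc_setIntegral_Iio (by linarith) hf fun r hr =>
    mul_nonneg (exp_pos _).le (hf0 r hr)).2

end ReflectedWeight

section Convolution

variable {lam a t u v D : ℝ} {g φ : ℝ → ℝ}

/-- `g` need not be integrable: as `g ≥ 0`, only the majorant has to be. -/
lemma mul_integral_exp_mul_sub_mul_le_of_le (hla : a < lam) (ha : 0 < a) (ht : 0 ≤ t)
    (hu : 0 ≤ u) (hD : 0 ≤ D) (hφ : IntervalIntegrable (fun s => exp (-a * s) * φ s) volume 0 t)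
    (hg0 : ∀ s ∈ Icc 0 t, 0 ≤ g s)
    (hg : ∀ s ∈ Icc 0 t, g s ≤ exp (-lam * s) * (u + v * φ s) + D) :
    a * ∫ s in (0:ℝ)..t, exp (-(lam - a) * (t - s)) * g s ≤
      exp (-(lam - a) * t) * (u + a * v * ∫ s in (0:ℝ)..t, exp (-a * s) * φ s)
        + a * D / (lam - a) := by
  set X := exp (-(lam - a) * t)
  set K : ℝ → ℝ := fun s => exp (-(lam - a) * (t - s))
  have hmaj : ∀ s ∈ Icc 0 t,
      K s * g s ≤ X * u * exp (-a * s) + X * v * (exp (-a * s) * φ s) + D * K s := fun s hs => by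
    have hK : K s * exp (-lam * s) = X * exp (-a * s) := by
      simp only [K, X, ← exp_add]; ring_nf
    linear_combination mul_le_mul_of_nonneg_left (hg s hs) (exp_pos _).le + (u + v * φ s) * hK
  have hint₁ : IntervalIntegrable (fun s => X * u * exp (-a * s)) volume 0 t :=
    (continuous_const.mul (continuous_exp.comp (continuous_const_mul _))).intervalIntegrable 0 t
  have hint₂ := hφ.const_mul (X * v)
  have hint₃ : IntervalIntegrable (fun s => D * K s) volume 0 t :=
    (continuous_const.mul (continuous_exp.comp
      (continuous_const.mul (continuous_sub_left t)))).intervalIntegrable 0 t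
  have hmono : ∫ s in (0:ℝ)..t, K s * g s ≤
      ∫ s in (0:ℝ)..t, X * u * exp (-a * s) + X * v * (exp (-a * s) * φ s) + D * K s := by
    rw [intervalIntegral.integral_of_le ht, intervalIntegral.integral_of_le ht]
    refine integral_mono_of_nonneg ?_ ((hint₁.add hint₂).add hint₃).1 ?_ <;>
      refine ae_restrict_of_forall_mem measurableSet_Ioc fun s hs => ?_
    · exact mul_nonneg (exp_pos _).le (hg0 s (Ioc_subset_Icc_self hs))
    · exact hmaj s (Ioc_subset_Icc_self hs)
  rw [intervalIntegral.integral_add (hint₁.add hint₂) hint₃,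
    intervalIntegral.integral_add hint₁ hint₂, intervalIntegral.integral_const_mul,
    intervalIntegral.integral_const_mul, intervalIntegral.integral_const_mul] at hmono
  have hIa := mul_integral_exp_neg_mul_le_one ha t
  have hIK := integral_exp_neg_mul_sub_le (sub_pos.2 hla) t
  have hXu : 0 ≤ X * u := mul_nonneg (exp_pos _).le hu
  calc a * ∫ s in (0:ℝ)..t, K s * g s
      ≤ X * u * (a * ∫ s in (0:ℝ)..t, exp (-a * s))
        + X * (a * v * ∫ s in (0:ℝ)..t, exp (-a * s) * φ s)
        + a * D * ∫ s in (0:ℝ)..t, K s := by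
        linear_combination mul_le_mul_of_nonneg_left hmono ha.le
    _ ≤ X * u * 1 + X * (a * v * ∫ s in (0:ℝ)..t, exp (-a * s) * φ s)
        + a * D * (1 / (lam - a)) := by
        gcongr
    _ = _ := by ring

lemma add_mul_integral_exp_mul_sub_mul_le {C E J : ℝ} {F : ℝ → ℝ} (hla : a < lam) (ha : 0 < a)
    (ht : 0 ≤ t) (hu : 0 ≤ u) (hv : 0 ≤ v) (hC : 0 ≤ C) (hφ0 : ∀ s ∈ Icc 0 t, 0 ≤ φ s)
    (hφ : IntervalIntegrable (fun s => exp (-a * s) * φ s) volume 0 t)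
    (hφJ : ∫ s in (0:ℝ)..t, exp (-a * s) * φ s ≤ J) (hF : ∀ s ∈ Icc 0 t, 0 ≤ F s ∧ F s ≤ E)
    (hg : ∀ s, g s = exp (-lam * s) * (u + v * φ s) + C + F s) :
    g t + a * ∫ s in (0:ℝ)..t, exp (-(lam - a) * (t - s)) * g s ≤
      exp (-(lam - a) * t) * (2 * u + v * φ t) + a * v * J + lam * (C + E) / (lam - a) := by
  have hE : 0 ≤ E := (hF 0 ⟨le_rfl, ht⟩).1.trans (hF 0 ⟨le_rfl, ht⟩).2
  have hg0 : ∀ s ∈ Icc 0 t, 0 ≤ g s := fun s hs => by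
    have := hφ0 s hs
    have := (hF s hs).1
    rw [hg s]
    positivity
  have hg_le : ∀ s ∈ Icc 0 t, g s ≤ exp (-lam * s) * (u + v * φ s) + (C + E) := fun s hs => by
    linear_combination hg s + (hF s hs).2
  have hconv := mul_integral_exp_mul_sub_mul_le_of_le hla ha ht hu (by positivity) hφ hg0 hg_le
  set X := exp (-(lam - a) * t)
  have hX1 : X ≤ 1 := exp_le_one_iff.2 (by nlinarith)
  have hgt : g t ≤ X * (u + v * φ t) + (C + E) := by
    have := hφ0 t ⟨ht, le_rfl⟩
    exact (hg_le t ⟨ht, le_rfl⟩).trans (by gcongr; exact exp_le_exp.2 (by nlinarith))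
  have hXJ : X * ∫ s in (0:ℝ)..t, exp (-a * s) * φ s ≤ J :=
    (mul_le_of_le_one_left (intervalIntegral.integral_nonneg ht fun s hs =>
      mul_nonneg (exp_pos _).le (hφ0 s hs)) hX1).trans hφJ
  have hsum : (C + E) + a * (C + E) / (lam - a) = lam * (C + E) / (lam - a) := by
    have := (sub_pos.2 hla).ne'
    field_simp
    ring
  linear_combination hgt + hconv + mul_le_mul_of_nonneg_left hXJ (by positivity : 0 ≤ a * v)
    + hsum

end Convolution

theorem stmt7_general (lam a c chat σ Cbar Ctil β u₀ : ℝ)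
    (hlama : a < lam) (ha : 0 < a) (hc : 0 < c) (hchat : 0 < chat)
    (hσ : 0 < σ) (hCbar : 0 < Cbar) (hCtil : 0 < Ctil)
    (hu₀ : 0 ≤ u₀)
    (h : ℝ → ℝ)
    (hnonneg : ∀ s : ℝ, s ≤ 0 → 0 ≤ h s)
    (hint1 : IntegrableOn (fun s => Real.exp (a * s) * h s) (Set.Iio 0))
    (hint2 : IntegrableOn (fun s => Real.exp (lam * s) * (-s) ^ (β - 1) * h s)
      (Set.Iio 0))
    (γ : ℝ → ℝ)
    (hγ : ∀ t : ℝ, γ t =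
      c * Real.exp (-lam * t) * u₀ + σ * chat * Real.exp (-lam * t) * h (-t)
      + c * Cbar / lam
      + σ * Ctil * ∫ r in (-t)..(0:ℝ), Real.exp (lam * r) * (-r) ^ (β - 1) * h r) :
    ∀ t : ℝ, 0 ≤ t →
      γ t + a * (∫ s in (0:ℝ)..t, Real.exp (-(lam - a) * (t - s)) * γ s) ≤
        Real.exp (-(lam - a) * t) * (2 * c * u₀ + σ * chat * h (-t))
        + c * Cbar / (lam - a)
        + a * σ * chat * (∫ s in Set.Iio (0:ℝ), Real.exp (a * s) * h s)
        + (σ * Ctil * lam / (lam - a)) *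
            ∫ s in Set.Iio (0:ℝ), Real.exp (lam * s) * (-s) ^ (β - 1) * h s := by
  intro t ht
  set J₂ := ∫ s in Iio (0:ℝ), exp (lam * s) * (-s) ^ (β - 1) * h s
  have hσCtil : 0 ≤ σ * Ctil := by positivity
  have hF : ∀ s ∈ Icc 0 t, 0 ≤ σ * Ctil * ∫ r in -s..0, exp (lam * r) * (-r) ^ (β - 1) * h r ∧
      σ * Ctil * ∫ r in -s..0, exp (lam * r) * (-r) ^ (β - 1) * h r ≤ σ * Ctil * J₂ :=
    fun s hs => by
      have hmem := intervalIntegral_mem_Icc_setIntegral_Iio (a := -s) (by linarith [hs.1]) hint2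
        fun r hr => mul_nonneg (mul_nonneg (exp_pos _).le (rpow_nonneg (neg_nonneg.2 hr) _))
          (hnonneg r hr)
      exact ⟨mul_nonneg hσCtil hmem.1, mul_le_mul_of_nonneg_left hmem.2 hσCtil⟩
  have key := add_mul_integral_exp_mul_sub_mul_le (g := γ) (u := c * u₀) (v := σ * chat)
    (C := c * Cbar / lam) hlama ha ht (by positivity) (by positivity)
    (div_nonneg (by positivity) (ha.trans hlama).le) (fun s hs => hnonneg (-s) (by linarith [hs.1]))
    (intervalIntegrable_exp_neg_mul_comp_neg ht hint1)
    (integral_exp_neg_mul_comp_neg_le ht hint1 hnonneg) hF (fun s => by rw [hγ s]; ring)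
  have hsum : lam * (c * Cbar / lam + σ * Ctil * J₂) / (lam - a)
      = c * Cbar / (lam - a) + σ * Ctil * lam / (lam - a) * J₂ := by
    have := (ha.trans hlama).ne'
    field_simp
  linear_combination key + hsum

/-- quantitative estimate behind the pullback absorbing set. -/
theorem stmt7 (lam a c chat σ Cbar Ctil β u₀ : ℝ)
    (hlama : a < lam) (ha : 0 < a) (hc : 0 < c) (hchat : 0 < chat)
    (hσ : 0 < σ) (hCbar : 0 < Cbar) (hCtil : 0 < Ctil)
    (hβ : 0 < β) (hβ1 : β ≤ 1) (hu₀ : 0 ≤ u₀)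
    (h : ℝ → ℝ) (hcont : ContinuousOn h (Set.Iic 0))
    (hnonneg : ∀ s : ℝ, s ≤ 0 → 0 ≤ h s)
    (hint1 : IntegrableOn (fun s => Real.exp (a * s) * h s) (Set.Iio 0))
    (hint2 : IntegrableOn (fun s => Real.exp (lam * s) * (-s) ^ (β - 1) * h s)
      (Set.Iio 0))
    (γ : ℝ → ℝ)
    (hγ : ∀ t : ℝ, γ t =
      c * Real.exp (-lam * t) * u₀ + σ * chat * Real.exp (-lam * t) * h (-t)
      + c * Cbar / lam
      + σ * Ctil * ∫ r in (-t)..(0:ℝ), Real.exp (lam * r) * (-r) ^ (β - 1) * h r) :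
    ∀ t : ℝ, 0 ≤ t →
      γ t + a * (∫ s in (0:ℝ)..t, Real.exp (-(lam - a) * (t - s)) * γ s) ≤
        Real.exp (-(lam - a) * t) * (2 * c * u₀ + σ * chat * h (-t))
        + c * Cbar / (lam - a)
        + a * σ * chat * (∫ s in Set.Iio (0:ℝ), Real.exp (a * s) * h s)
        + (σ * Ctil * lam / (lam - a)) *
            ∫ s in Set.Iio (0:ℝ), Real.exp (lam * s) * (-s) ^ (β - 1) * h s :=
  stmt7_general lam a c chat σ Cbar Ctil β u₀ hlama ha hc hchat hσ hCbar hCtil hu₀ h hnonneg hint1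
    hint2 γ hγ
end

section
/- Let λ > a > 0, c > 0, ĉ > 0, σ > 0, C̄ > 0, C̃ > 0, β ∈ (0,1], u₀ ≥ 0, and let h : (−∞,0] → [0,∞) be continuous such that s ↦ exp(a·s)h(s) and s ↦ exp(λs)(−s)^{β−1}h(s) are integrable on (−∞,0), and such that h has subexponential growth: for every δ > 0, exp(−δt)·h(−t) → 0 as t → ∞. Define γ(t) := c·exp(−λt)·u₀ + σĉ·exp(−λt)·h(−t) + c·C̄/λ + σC̃ ∫_{−t}^{0} exp(λr)(−r)^{β−1} h(r) dr. If u : [0,∞) → [0,∞) is continuous and satisfies u(t) ≤ γ(t) + a ∫₀ᵗ exp(−(λ−a)(t−s)) γ(s) ds for all t ≥ 0, then limsup_{t→∞} u(t) ≤ ρ, where ρ := c·C̄/(λ−a) + a·σĉ ∫_{−∞}^{0} exp(a·s) h(s) ds + (σC̃λ/(λ−a)) ∫_{−∞}^{0} exp(λs)(−s)^{β−1} h(s) ds. -/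
/-!
Split `γ = τ + ψ` with the transient part `τ s = exp (-λ s) (c u₀ + σ ĉ h (-s))`, which tends to
`0` because `h` grows subexponentially, and `ψ s = c C̄ / λ + σ C̃ ∫_{-s}^0 exp (λ r) (-r)^(β-1) h r dr`,
bounded by `K = c C̄ / λ + σ C̃ ∫_{-∞}^0 exp (λ r) (-r)^(β-1) h r dr`. Convolution with the kernel
`exp (-(λ - a)(t - s))` sends `τ` to `exp (-(λ - a) t) ∫_0^t exp (-a s) (c u₀ + σ ĉ h (-s)) ds → 0`
and `ψ` to at most `K ∫_0^t exp (-(λ - a) r) dr → K / (λ - a)`. Hence `limsup u ≤ λ K / (λ - a)`,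
which is `ρ` minus the nonnegative term `a σ ĉ ∫_{-∞}^0 exp (a s) h s ds`.
-/

open MeasureTheory Filter Real Set Topology

lemma tendsto_exp_neg_mul_atTop_nhds_zero {κ : ℝ} (hκ : 0 < κ) :
    Tendsto (fun t => exp (-κ * t)) atTop (𝓝 0) :=
  tendsto_exp_atBot.comp (tendsto_id.const_mul_atTop_of_neg (neg_neg_of_pos hκ))

lemma exp_neg_mul_sub_mul (κ t s x : ℝ) :
    exp (-κ * (t - s)) * x = exp (-κ * t) * (exp (κ * s) * x) := by
  rw [← mul_assoc, ← exp_add]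
  ring_nf

lemma integral_exp_neg_mul_sub_mul (κ t : ℝ) (g : ℝ → ℝ) :
    ∫ s in 0..t, exp (-κ * (t - s)) * g s = exp (-κ * t) * ∫ s in 0..t, exp (κ * s) * g s := by
  simp_rw [exp_neg_mul_sub_mul κ t]
  exact intervalIntegral.integral_const_mul _ _

lemma intervalIntegrable_exp_neg_mul_sub_mul {κ t : ℝ} {g : ℝ → ℝ} (ht : 0 ≤ t)
    (hg : IntegrableOn (fun s => exp (κ * s) * g s) (Ioi 0)) :
    IntervalIntegrable (fun s => exp (-κ * (t - s)) * g s) volume 0 t := by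
  simp_rw [exp_neg_mul_sub_mul κ t]
  exact ((intervalIntegrable_iff_integrableOn_Ioc_of_le ht).2
    (hg.mono_set Ioc_subset_Ioi_self)).const_mul _

lemma tendsto_integral_exp_neg_mul_sub {κ : ℝ} (hκ : 0 < κ) :
    Tendsto (fun t => ∫ s in 0..t, exp (-κ * (t - s))) atTop (𝓝 κ⁻¹) := by
  have h := intervalIntegral_tendsto_integral_Ioi 0 (exp_neg_integrableOn_Ioi 0 hκ) tendsto_id
  rw [integral_exp_mul_Ioi (neg_neg_of_pos hκ)] at h
  refine (h.congr fun t => ?_).trans_eq (by simp)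
  simpa using
    (intervalIntegral.integral_comp_sub_left (a := 0) (b := t) (fun x => exp (-κ * x)) t).symm

lemma tendsto_integral_exp_neg_mul_sub_mul {κ : ℝ} (hκ : 0 < κ) {g : ℝ → ℝ}
    (hg : IntegrableOn (fun s => exp (κ * s) * g s) (Ioi 0)) :
    Tendsto (fun t => ∫ s in 0..t, exp (-κ * (t - s)) * g s) atTop (𝓝 0) := by
  simp_rw [integral_exp_neg_mul_sub_mul]
  simpa using (tendsto_exp_neg_mul_atTop_nhds_zero hκ).mul
    (intervalIntegral_tendsto_integral_Ioi 0 hg tendsto_id)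

theorem limsup_le_of_le_add_integral_exp_kernel {κ a K : ℝ} {u τ ψ : ℝ → ℝ}
    (hκ : 0 < κ) (ha : 0 ≤ a)
    (hτ : Tendsto τ atTop (𝓝 0)) (hτint : IntegrableOn (fun s => exp (κ * s) * τ s) (Ioi 0))
    (hψint : ∀ t, 0 ≤ t → IntervalIntegrable ψ volume 0 t) (hψ : ∀ s, 0 ≤ s → ψ s ≤ K)
    (hu_cobdd : IsCoboundedUnder (· ≤ ·) atTop u)
    (hu : ∀ t, 0 ≤ t →
      u t ≤ τ t + ψ t + a * ∫ s in 0..t, exp (-κ * (t - s)) * (τ s + ψ s)) :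
    limsup u atTop ≤ (1 + a / κ) * K := by
  set B := fun t => τ t + K + a * ((∫ s in 0..t, exp (-κ * (t - s)) * τ s)
    + K * ∫ s in 0..t, exp (-κ * (t - s)))
  have hB : Tendsto B atTop (𝓝 ((1 + a / κ) * K)) := by
    convert (hτ.add_const K).add (((tendsto_integral_exp_neg_mul_sub_mul hκ hτint).add
      ((tendsto_integral_exp_neg_mul_sub hκ).const_mul K)).const_mul a) using 2
    ring
  have huB : ∀ t, 0 ≤ t → u t ≤ B t := by
    intro t ht
    have hkτ := intervalIntegrable_exp_neg_mul_sub_mul ht hτint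
    have hkψ : IntervalIntegrable (fun s => exp (-κ * (t - s)) * ψ s) volume 0 t :=
      (hψint t ht).continuousOn_mul (by fun_prop)
    have hkK : IntervalIntegrable (fun s => exp (-κ * (t - s)) * K) volume 0 t :=
      (continuous_exp.comp (by fun_prop)).intervalIntegrable _ _ |>.mul_const K
    have hconv : ∫ s in 0..t, exp (-κ * (t - s)) * (τ s + ψ s)
        ≤ (∫ s in 0..t, exp (-κ * (t - s)) * τ s) + K * ∫ s in 0..t, exp (-κ * (t - s)) := by
      calc ∫ s in 0..t, exp (-κ * (t - s)) * (τ s + ψ s)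
          = (∫ s in 0..t, exp (-κ * (t - s)) * τ s) + ∫ s in 0..t, exp (-κ * (t - s)) * ψ s := by
            simp_rw [mul_add]
            exact intervalIntegral.integral_add hkτ hkψ
        _ ≤ (∫ s in 0..t, exp (-κ * (t - s)) * τ s) + ∫ s in 0..t, exp (-κ * (t - s)) * K := by
            gcongr
            exact intervalIntegral.integral_mono_on ht hkψ hkK
              fun s hs => mul_le_mul_of_nonneg_left (hψ s hs.1) (exp_pos _).le
        _ = _ := by rw [intervalIntegral.integral_mul_const, mul_comm]
    calc u t ≤ _ := hu t ht
      _ ≤ B t := by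
        simp only [B]
        gcongr
        exact hψ t ht
  exact (limsup_le_limsup (eventually_atTop.2 ⟨0, huB⟩) hu_cobdd hB.isBoundedUnder_le).trans
    hB.limsup_eq.le

lemma intervalIntegral_le_integral_Iio {F : ℝ → ℝ} {x b : ℝ} (hxb : x ≤ b)
    (hF : IntegrableOn F (Iio b)) (hF0 : ∀ r ≤ b, 0 ≤ F r) :
    ∫ r in x..b, F r ≤ ∫ r in Iio b, F r := by
  rw [← integrableOn_Iic_iff_integrableOn_Iio] at hF
  rw [intervalIntegral.integral_of_le hxb, ← integral_Iic_eq_integral_Iio]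
  exact setIntegral_mono_set hF
    ((ae_restrict_iff' measurableSet_Iic).2 (ae_of_all _ hF0)) Ioc_subset_Iic_self.eventuallyLE

lemma intervalIntegrable_integral_neg_left {F : ℝ → ℝ} (hF : IntegrableOn F (Iio 0)) {t : ℝ}
    (ht : 0 ≤ t) : IntervalIntegrable (fun s => ∫ r in (-s)..0, F r) volume 0 t := by
  rw [← integrableOn_Iic_iff_integrableOn_Iio] at hF
  have hcont := intervalIntegral.continuousOn_primitive_interval_left (a := -t) (b := 0)
    (hF.mono_set fun r hr => by rw [uIcc_of_le (neg_nonpos.2 ht)] at hr; exact hr.2)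
  refine (hcont.comp continuous_neg.continuousOn fun s hs => ?_).intervalIntegrable
  rw [uIcc_of_le ht] at hs
  rw [uIcc_of_le (neg_nonpos.2 ht)]
  exact ⟨neg_le_neg hs.2, neg_nonpos.2 hs.1⟩

lemma integrableOn_Ioi_exp_sub_mul_mul_exp_neg_mul {a lam c₀ c₁ : ℝ} {h : ℝ → ℝ} (ha : 0 < a)
    (hh : IntegrableOn (fun s => exp (a * s) * h s) (Iio 0)) :
    IntegrableOn (fun s => exp ((lam - a) * s) * (exp (-lam * s) * (c₀ + c₁ * h (-s))))
      (Ioi 0) := by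
  rw [← neg_zero] at hh
  have hh' := hh.comp_neg_Ioi.const_mul c₁
  refine IntegrableOn.congr_fun (((exp_neg_integrableOn_Ioi 0 ha).const_mul c₀).add hh')
    (fun s _ => ?_) measurableSet_Ioi
  have hexp : exp ((lam - a) * s) * exp (-lam * s) = exp (-a * s) := by
    rw [← exp_add]
    ring_nf
  show c₀ * exp (-a * s) + c₁ * (exp (a * -s) * h (-s)) = _
  rw [mul_neg, ← neg_mul]
  linear_combination (-(c₀ + c₁ * h (-s))) * hexp

theorem stmt8_general (lam a c chat σ Cbar Ctil β u₀ : ℝ)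
    (hlama : a < lam) (ha : 0 < a) (hchat : 0 < chat)
    (hσ : 0 < σ) (hCtil : 0 < Ctil)
    (h : ℝ → ℝ)
    (hnonneg : ∀ s : ℝ, s ≤ 0 → 0 ≤ h s)
    (hint1 : IntegrableOn (fun s => Real.exp (a * s) * h s) (Set.Iio 0))
    (hint2 : IntegrableOn (fun s => Real.exp (lam * s) * (-s) ^ (β - 1) * h s)
      (Set.Iio 0))
    (hsub : ∀ δ : ℝ, 0 < δ →
      Tendsto (fun t : ℝ => Real.exp (-δ * t) * h (-t)) atTop (nhds 0))
    (γ : ℝ → ℝ)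
    (hγ : ∀ t : ℝ, γ t =
      c * Real.exp (-lam * t) * u₀ + σ * chat * Real.exp (-lam * t) * h (-t)
      + c * Cbar / lam
      + σ * Ctil * ∫ r in (-t)..(0:ℝ), Real.exp (lam * r) * (-r) ^ (β - 1) * h r)
    (u : ℝ → ℝ)
    (hupos : ∀ t : ℝ, 0 ≤ t → 0 ≤ u t)
    (hineq : ∀ t : ℝ, 0 ≤ t →
      u t ≤ γ t + a * ∫ s in (0:ℝ)..t, Real.exp (-(lam - a) * (t - s)) * γ s) :
    limsup u atTop ≤
      c * Cbar / (lam - a)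
      + a * σ * chat * (∫ s in Set.Iio (0:ℝ), Real.exp (a * s) * h s)
      + (σ * Ctil * lam / (lam - a)) *
          ∫ s in Set.Iio (0:ℝ), Real.exp (lam * s) * (-s) ^ (β - 1) * h s := by
  have hlam : 0 < lam := ha.trans hlama
  set f := fun r => exp (lam * r) * (-r) ^ (β - 1) * h r
  have hf : ∀ r ≤ 0, 0 ≤ f r := fun r hr =>
    mul_nonneg (mul_nonneg (exp_pos _).le (rpow_nonneg (neg_nonneg.2 hr) _)) (hnonneg r hr)
  have hγ_split : γ = fun s => exp (-lam * s) * (c * u₀ + σ * chat * h (-s))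
      + (c * Cbar / lam + σ * Ctil * ∫ r in (-s)..0, f r) := funext fun s => by rw [hγ]; ring
  subst hγ_split
  have hτ : Tendsto (fun t => exp (-lam * t) * (c * u₀ + σ * chat * h (-t))) atTop (𝓝 0) := by
    have h0 := ((tendsto_exp_neg_mul_atTop_nhds_zero hlam).const_mul (c * u₀)).add
      ((hsub lam hlam).const_mul (σ * chat))
    rw [mul_zero, mul_zero, add_zero] at h0
    exact h0.congr fun t => by ring
  have hlimsup := limsup_le_of_le_add_integral_exp_kernel
    (K := c * Cbar / lam + σ * Ctil * ∫ r in Iio 0, f r) (sub_pos.2 hlama) ha.le hτ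
    (integrableOn_Ioi_exp_sub_mul_mul_exp_neg_mul ha hint1)
    (fun t ht => intervalIntegrable_const.add
      ((intervalIntegrable_integral_neg_left hint2 ht).const_mul _))
    (fun s hs => by
      gcongr
      exact intervalIntegral_le_integral_Iio (neg_nonpos.2 hs) hint2 hf)
    (isCoboundedUnder_le_of_eventually_le _ (eventually_atTop.2 ⟨0, hupos⟩)) hineq
  have hJ : 0 ≤ ∫ s in Iio 0, exp (a * s) * h s := setIntegral_nonneg measurableSet_Iio
    fun s hs => mul_nonneg (exp_pos _).le (hnonneg s hs.le)
  have hK : (1 + a / (lam - a)) * (c * Cbar / lam + σ * Ctil * ∫ r in Iio 0, f r)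
      = c * Cbar / (lam - a) + σ * Ctil * lam / (lam - a) * ∫ r in Iio 0, f r := by
    field_simp [(sub_pos.2 hlama).ne']
    ring
  rw [hK] at hlimsup
  linarith [mul_nonneg (mul_nonneg (mul_nonneg ha.le hσ.le) hchat.le) hJ]

/-- the asymptotic bound giving the radius of the pullback
absorbing ball. -/
theorem stmt8 (lam a c chat σ Cbar Ctil β u₀ : ℝ)
    (hlama : a < lam) (ha : 0 < a) (hc : 0 < c) (hchat : 0 < chat)
    (hσ : 0 < σ) (hCbar : 0 < Cbar) (hCtil : 0 < Ctil)
    (hβ : 0 < β) (hβ1 : β ≤ 1) (hu₀ : 0 ≤ u₀)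
    (h : ℝ → ℝ) (hcont : ContinuousOn h (Set.Iic 0))
    (hnonneg : ∀ s : ℝ, s ≤ 0 → 0 ≤ h s)
    (hint1 : IntegrableOn (fun s => Real.exp (a * s) * h s) (Set.Iio 0))
    (hint2 : IntegrableOn (fun s => Real.exp (lam * s) * (-s) ^ (β - 1) * h s)
      (Set.Iio 0))
    (hsub : ∀ δ : ℝ, 0 < δ →
      Tendsto (fun t : ℝ => Real.exp (-δ * t) * h (-t)) atTop (nhds 0))
    (γ : ℝ → ℝ)
    (hγ : ∀ t : ℝ, γ t =
      c * Real.exp (-lam * t) * u₀ + σ * chat * Real.exp (-lam * t) * h (-t)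
      + c * Cbar / lam
      + σ * Ctil * ∫ r in (-t)..(0:ℝ), Real.exp (lam * r) * (-r) ^ (β - 1) * h r)
    (u : ℝ → ℝ) (hu : ContinuousOn u (Set.Ici 0))
    (hupos : ∀ t : ℝ, 0 ≤ t → 0 ≤ u t)
    (hineq : ∀ t : ℝ, 0 ≤ t →
      u t ≤ γ t + a * ∫ s in (0:ℝ)..t, Real.exp (-(lam - a) * (t - s)) * γ s) :
    limsup u atTop ≤
      c * Cbar / (lam - a)
      + a * σ * chat * (∫ s in Set.Iio (0:ℝ), Real.exp (a * s) * h s)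
      + (σ * Ctil * lam / (lam - a)) *
          ∫ s in Set.Iio (0:ℝ), Real.exp (lam * s) * (-s) ^ (β - 1) * h s :=
  stmt8_general lam a c chat σ Cbar Ctil β u₀ hlama ha hchat hσ hCtil h hnonneg hint1 hint2 hsub γ
    hγ u hupos hineq
end

section
/- Let X be a Banach space and Y a normed space with a continuous linear embedding ι : Y → X. Let Δ = {(s,t) : 0 ≤ s ≤ t} and U : Δ → L(X) a family of bounded linear operators with (s,t) ↦ U(t,s)x continuous for each x ∈ X and ‖U(t,s)‖_{L(X)} ≤ c·exp(−λ(t−s)) for constants c > 0, λ > 0. Suppose moreover that for all 0 ≤ s < t there exist bounded linear operators W(t,s) : X → Y with ι ∘ W(t,s) = U(t,s) and ‖W(t,s)‖_{L(X,Y)} ≤ C̃·exp(−λ(t−s))·(t−s)^{−η} for constants C̃ > 0 and η ∈ (0,1). Let F : X → X be globally Lipschitz with constant C_F > 0, assume λ > c·C_F, let g : [0,∞) → X be continuous, and let u, v : [0,∞) → X be continuous functions satisfying u(t) = U(t,0)u₀ + ∫₀ᵗ U(t,s)(F(u(s))) ds + g(t) and v(t) = U(t,0)v₀ + ∫₀ᵗ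 U(t,s)(F(v(s))) ds + g(t) for all t ≥ 0, and suppose s ↦ W(t̃,s)(F(u(s)) − F(v(s))) is Bochner integrable on [0,t̃] for a given t̃ > 0. Then the element w := W(t̃,0)(u₀ − v₀) + ∫₀^{t̃} W(t̃,s)(F(u(s)) − F(v(s))) ds of Y satisfies ι(w) = u(t̃) − v(t̃) and ‖w‖_Y ≤ κ·‖u₀ − v₀‖_X, where κ := C̃·t̃^{−η} + C_F·C̃·c·exp(c·C_F/λ)·∫₀^{t̃} exp(−λs)·s^{−η} ds. -/
/-!
Subtracting the two mild equations removes `g`. For `φ s = exp (λ s) ‖u s - v s‖`, the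
exponential bound on `U` and the Lipschitz bound on `F` give
`φ s ≤ c ‖u₀ - v₀‖ + c C_F ∫₀ˢ φ`, so by Grönwall `φ s ≤ c ‖u₀ - v₀‖ exp (c C_F s)`, and
`c C_F ≤ λ` turns this into the uniform bound `‖u s - v s‖ ≤ c ‖u₀ - v₀‖`.
Because `ι ∘ W = U` off the diagonal, `ι w` is the mild representation of `u t̃ - v t̃`, and the
smoothing estimate for `W` with the uniform bound gives
`‖w‖ ≤ (C̃ t̃^(-η) + C_F C̃ c ∫₀^t̃ exp (-λ s) s^(-η) ds) ‖u₀ - v₀‖`; the factor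
`exp (c C_F / λ) ≥ 1` in the stated constant is slack.
-/

open MeasureTheory Set Filter Topology Real

theorem le_mul_exp_of_le_add_mul_integral {φ : ℝ → ℝ} {a b C K : ℝ} (hK : 0 ≤ K)
    (hφ : ContinuousOn φ (Icc a b))
    (h : ∀ x ∈ Icc a b, φ x ≤ C + K * ∫ y in a..x, φ y) :
    ∀ x ∈ Icc a b, φ x ≤ C * exp (K * (x - a)) := by
  intro x hx
  have hab : a ≤ b := hx.1.trans hx.2
  have hint : ∀ y ∈ Icc a b, IntervalIntegrable φ volume a y := fun y hy =>
    (hφ.mono (Icc_subset_Icc le_rfl hy.2)).intervalIntegrable_of_Icc hy.1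
  have hprim : ContinuousOn (fun x => ∫ y in a..x, φ y) (Icc a b) := by
    simpa only [uIcc_of_le hab] using
      intervalIntegral.continuousOn_primitive_interval' (hint b ⟨hab, le_rfl⟩) left_mem_uIcc
  have hderiv : ∀ y ∈ Ico a b,
      HasDerivWithinAt (fun x => ∫ y in a..x, φ y) (φ y) (Ici y) y := by
    intro y hy
    have hφy : ContinuousOn φ (Icc y b) := hφ.mono (Icc_subset_Icc hy.1 le_rfl)
    have hφy' := hφy y ⟨le_rfl, hy.2.le⟩
    rw [ContinuousWithinAt, nhdsWithin_Icc_eq_nhdsGE hy.2] at hφy'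
    exact intervalIntegral.integral_hasDerivWithinAt_right (hint y ⟨hy.1, hy.2.le⟩)
      ⟨Icc y b, Icc_mem_nhdsGT hy.2, hφy.aestronglyMeasurable measurableSet_Icc⟩
      (hφy'.mono_left (nhdsWithin_mono y Ioi_subset_Ici_self))
  have hgron := le_gronwallBound_of_liminf_deriv_right_le (δ := 0) hprim
    (fun y hy _ hr => (hderiv y hy).liminf_right_slope_le hr) (by simp)
    (fun y hy => (h y ⟨hy.1, hy.2.le⟩).trans_eq (add_comm _ _)) x hx
  calc φ x ≤ C + K * ∫ y in a..x, φ y := h x hx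
    _ ≤ C + K * gronwallBound 0 K C (x - a) := by gcongr
    _ = C * exp (K * (x - a)) := by
      rcases hK.eq_or_lt with rfl | hK
      · simp
      · rw [gronwallBound_of_K_ne_0 hK.ne']
        field_simp
        ring

theorem ContinuousWithinAt.clm_apply_of_norm_le {α E F : Type*} [TopologicalSpace α]
    [NormedAddCommGroup E] [NormedSpace ℝ E] [NormedAddCommGroup F] [NormedSpace ℝ F]
    {T : α → E →L[ℝ] F} {f : α → E} {s : Set α} {a : α} {C : ℝ}
    (hT : ∀ e, ContinuousWithinAt (fun x => T x e) s a) (hC : ∀ x ∈ s, ‖T x‖ ≤ C)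
    (hf : ContinuousWithinAt f s a) : ContinuousWithinAt (fun x => T x (f x)) s a := by
  have hsmall : Tendsto (fun x => T x (f x - f a)) (𝓝[s] a) (𝓝 0) := by
    refine squeeze_zero_norm' ?_ (by simpa using (hf.sub_const (f a)).norm.const_mul C)
    filter_upwards [self_mem_nhdsWithin] with x hx
    exact (T x).le_of_opNorm_le (hC x hx) _
  simpa [ContinuousWithinAt] using hsmall.add (hT (f a))

theorem continuous_of_norm_sub_le {E F : Type*} [SeminormedAddCommGroup E]
    [SeminormedAddCommGroup F] {f : E → F} {C : ℝ} (hf : ∀ x y, ‖f x - f y‖ ≤ C * ‖x - y‖) :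
    Continuous f :=
  (LipschitzWith.of_dist_le' (by simpa only [dist_eq_norm] using hf)).continuous

theorem intervalIntegrable_exp_mul_rpow_neg (lam : ℝ) {η : ℝ} (hη : η < 1) (t : ℝ) :
    IntervalIntegrable (fun s => exp (-lam * s) * s ^ (-η)) volume 0 t :=
  (intervalIntegral.intervalIntegrable_rpow' (by linarith)).continuousOn_mul
    (by fun_prop : Continuous fun s => exp (-lam * s)).continuousOn

section

variable {X : Type*} [NormedAddCommGroup X] [NormedSpace ℝ X]

theorem continuousOn_evolution_apply {U : ℝ → ℝ → X →L[ℝ] X} {c lam t : ℝ} {f : ℝ → X}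
    (hUcont : ∀ x : X, ContinuousOn (fun p : ℝ × ℝ => U p.2 p.1 x)
      {p : ℝ × ℝ | 0 ≤ p.1 ∧ p.1 ≤ p.2})
    (hc : 0 ≤ c) (hlam : 0 ≤ lam)
    (hU : ∀ s t : ℝ, 0 ≤ s → s ≤ t → ‖U t s‖ ≤ c * exp (-lam * (t - s)))
    (hf : ContinuousOn f (Icc 0 t)) :
    ContinuousOn (fun s => U t s (f s)) (Icc 0 t) := fun s hs =>
  ContinuousWithinAt.clm_apply_of_norm_le
    (fun x => (hUcont x).comp (continuous_id.prodMk continuous_const).continuousOn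
      (fun r hr => hr) s hs)
    (fun r hr => (hU r t hr.1 hr.2).trans
      (mul_le_of_le_one_right hc (exp_le_one_iff.2 (by nlinarith [hr.2]))))
    (hf s hs)

def IsMildSolution (U : ℝ → ℝ → X →L[ℝ] X) (F : X → X) (g : ℝ → X) (x₀ : X) (u : ℝ → X) :
    Prop :=
  ∀ t : ℝ, 0 ≤ t → u t = U t 0 x₀ + (∫ s in (0:ℝ)..t, U t s (F (u s))) + g t

theorem IsMildSolution.sub_eq {U : ℝ → ℝ → X →L[ℝ] X} {F : X → X} {g : ℝ → X} {u₀ v₀ : X}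
    {u v : ℝ → X} {c lam t : ℝ}
    (hUcont : ∀ x : X, ContinuousOn (fun p : ℝ × ℝ => U p.2 p.1 x)
      {p : ℝ × ℝ | 0 ≤ p.1 ∧ p.1 ≤ p.2})
    (hc : 0 ≤ c) (hlam : 0 ≤ lam)
    (hU : ∀ s t : ℝ, 0 ≤ s → s ≤ t → ‖U t s‖ ≤ c * exp (-lam * (t - s)))
    (hF : Continuous F) (hu : IsMildSolution U F g u₀ u) (hv : IsMildSolution U F g v₀ v)
    (huc : ContinuousOn u (Ici 0)) (hvc : ContinuousOn v (Ici 0)) (ht : 0 ≤ t) :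
    u t - v t = U t 0 (u₀ - v₀) + ∫ s in (0:ℝ)..t, U t s (F (u s) - F (v s)) := by
  have hint : ∀ w : ℝ → X, ContinuousOn w (Ici 0) →
      IntervalIntegrable (fun s => U t s (F (w s))) volume 0 t := fun w hw =>
    (continuousOn_evolution_apply hUcont hc hlam hU
      (hF.comp_continuousOn (hw.mono Icc_subset_Ici_self))).intervalIntegrable_of_Icc ht
  simp only [map_sub, intervalIntegral.integral_sub (hint u huc) (hint v hvc), hu t ht, hv t ht]
  abel

theorem norm_integral_evolution_le {U : ℝ → ℝ → X →L[ℝ] X} {c lam t : ℝ} {f : ℝ → X}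
    {h : ℝ → ℝ}
    (hU : ∀ s t : ℝ, 0 ≤ s → s ≤ t → ‖U t s‖ ≤ c * exp (-lam * (t - s)))
    (ht : 0 ≤ t) (hfh : ∀ s ∈ Icc 0 t, ‖f s‖ ≤ h s) (hh : ContinuousOn h (Icc 0 t)) :
    ‖∫ s in (0:ℝ)..t, U t s (f s)‖ ≤ c * ∫ s in (0:ℝ)..t, exp (-lam * (t - s)) * h s := by
  rw [← intervalIntegral.integral_const_mul]
  refine intervalIntegral.norm_integral_le_of_norm_le ht (ae_of_all _ fun s hs => ?_) ?_
  · calc ‖U t s (f s)‖ ≤ ‖U t s‖ * ‖f s‖ := (U t s).le_opNorm _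
      _ ≤ c * exp (-lam * (t - s)) * h s :=
        mul_le_mul (hU s t hs.1.le hs.2) (hfh s (Ioc_subset_Icc_self hs)) (norm_nonneg _)
          ((norm_nonneg _).trans (hU s t hs.1.le hs.2))
      _ = c * (exp (-lam * (t - s)) * h s) := mul_assoc _ _ _
  · refine ContinuousOn.intervalIntegrable_of_Icc ht (continuousOn_const.mul ?_)
    exact (by fun_prop : Continuous fun s => exp (-lam * (t - s))).continuousOn.mul hh

theorem IsMildSolution.exp_mul_norm_sub_le {U : ℝ → ℝ → X →L[ℝ] X} {F : X → X} {g : ℝ → X}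
    {u₀ v₀ : X} {u v : ℝ → X} {c lam C_F t : ℝ}
    (hUcont : ∀ x : X, ContinuousOn (fun p : ℝ × ℝ => U p.2 p.1 x)
      {p : ℝ × ℝ | 0 ≤ p.1 ∧ p.1 ≤ p.2})
    (hc : 0 ≤ c) (hlam : 0 ≤ lam)
    (hU : ∀ s t : ℝ, 0 ≤ s → s ≤ t → ‖U t s‖ ≤ c * exp (-lam * (t - s)))
    (hF : ∀ x y : X, ‖F x - F y‖ ≤ C_F * ‖x - y‖)
    (hu : IsMildSolution U F g u₀ u) (hv : IsMildSolution U F g v₀ v)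
    (huc : ContinuousOn u (Ici 0)) (hvc : ContinuousOn v (Ici 0)) (ht : 0 ≤ t) :
    exp (lam * t) * ‖u t - v t‖ ≤
      c * ‖u₀ - v₀‖ + c * C_F * ∫ s in (0:ℝ)..t, exp (lam * s) * ‖u s - v s‖ := by
  have hinit : ‖U t 0 (u₀ - v₀)‖ ≤ c * exp (-lam * t) * ‖u₀ - v₀‖ :=
    (U t 0).le_of_opNorm_le (by simpa using hU 0 t le_rfl ht) _
  have hduhamel := norm_integral_evolution_le (f := fun s => F (u s) - F (v s)) hU ht
    (fun s _ => hF (u s) (v s))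
    (continuousOn_const.mul ((huc.sub hvc).norm.mono Icc_subset_Ici_self))
  have hweight : ∀ s, exp (lam * t) * (exp (-lam * (t - s)) * (C_F * ‖u s - v s‖)) =
      C_F * (exp (lam * s) * ‖u s - v s‖) := fun s => by
    rw [← mul_assoc, ← exp_add]; ring_nf
  calc exp (lam * t) * ‖u t - v t‖
      ≤ exp (lam * t) * (c * exp (-lam * t) * ‖u₀ - v₀‖ +
          c * ∫ s in (0:ℝ)..t, exp (-lam * (t - s)) * (C_F * ‖u s - v s‖)) := by
        rw [hu.sub_eq hUcont hc hlam hU (continuous_of_norm_sub_le hF) hv huc hvc ht]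
        gcongr
        exact (norm_add_le _ _).trans (add_le_add hinit hduhamel)
    _ = c * ‖u₀ - v₀‖ * (exp (lam * t) * exp (-lam * t)) + c * ∫ s in (0:ℝ)..t,
          exp (lam * t) * (exp (-lam * (t - s)) * (C_F * ‖u s - v s‖)) := by
        rw [intervalIntegral.integral_const_mul]; ring
    _ = c * ‖u₀ - v₀‖ + c * C_F * ∫ s in (0:ℝ)..t, exp (lam * s) * ‖u s - v s‖ := by
        rw [← exp_add, neg_mul, add_neg_cancel, exp_zero, mul_one]
        simp only [hweight, intervalIntegral.integral_const_mul]
        ring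

theorem IsMildSolution.norm_sub_le {U : ℝ → ℝ → X →L[ℝ] X} {F : X → X} {g : ℝ → X}
    {u₀ v₀ : X} {u v : ℝ → X} {c lam C_F t : ℝ}
    (hUcont : ∀ x : X, ContinuousOn (fun p : ℝ × ℝ => U p.2 p.1 x)
      {p : ℝ × ℝ | 0 ≤ p.1 ∧ p.1 ≤ p.2})
    (hc : 0 ≤ c)
    (hU : ∀ s t : ℝ, 0 ≤ s → s ≤ t → ‖U t s‖ ≤ c * exp (-lam * (t - s)))
    (hF : ∀ x y : X, ‖F x - F y‖ ≤ C_F * ‖x - y‖) (hCF : 0 ≤ C_F) (hgap : c * C_F ≤ lam)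
    (hu : IsMildSolution U F g u₀ u) (hv : IsMildSolution U F g v₀ v)
    (huc : ContinuousOn u (Ici 0)) (hvc : ContinuousOn v (Ici 0)) (ht : 0 ≤ t) :
    ‖u t - v t‖ ≤ c * ‖u₀ - v₀‖ := by
  have hlam : 0 ≤ lam := (mul_nonneg hc hCF).trans hgap
  have hφ : ContinuousOn (fun s => exp (lam * s) * ‖u s - v s‖) (Icc 0 t) :=
    (continuous_exp.comp (continuous_const_mul lam)).continuousOn.mul
      ((huc.sub hvc).norm.mono Icc_subset_Ici_self)
  have hgron := le_mul_exp_of_le_add_mul_integral (mul_nonneg hc hCF) hφ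
    (fun s hs => hu.exp_mul_norm_sub_le hUcont hc hlam hU hF hv huc hvc hs.1) t ⟨ht, le_rfl⟩
  have hexp : exp (c * C_F * t) ≤ exp (lam * t) := exp_le_exp.2 (by nlinarith)
  rw [sub_zero] at hgron
  refine le_of_mul_le_mul_left ?_ (exp_pos (lam * t))
  calc exp (lam * t) * ‖u t - v t‖ ≤ c * ‖u₀ - v₀‖ * exp (c * C_F * t) := hgron
    _ ≤ c * ‖u₀ - v₀‖ * exp (lam * t) := by gcongr
    _ = exp (lam * t) * (c * ‖u₀ - v₀‖) := mul_comm _ _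

variable {Y : Type*} [NormedAddCommGroup Y] [NormedSpace ℝ Y]

theorem norm_integral_smoothing_le {W : ℝ → ℝ → X →L[ℝ] Y} {Ctil lam η t M : ℝ} {f : ℝ → X}
    (hW : ∀ s t : ℝ, 0 ≤ s → s < t →
      ‖W t s‖ ≤ Ctil * exp (-lam * (t - s)) * (t - s) ^ (-η))
    (hη : η < 1) (ht : 0 ≤ t) (hf : ∀ s ∈ Ico 0 t, ‖f s‖ ≤ M) :
    ‖∫ s in (0:ℝ)..t, W t s (f s)‖ ≤
      Ctil * M * ∫ s in (0:ℝ)..t, exp (-lam * s) * s ^ (-η) := by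
  have hreflect : ∫ s in (0:ℝ)..t, exp (-lam * (t - s)) * (t - s) ^ (-η) =
      ∫ s in (0:ℝ)..t, exp (-lam * s) * s ^ (-η) := by
    simpa using intervalIntegral.integral_comp_sub_left
      (fun s => exp (-lam * s) * s ^ (-η)) t (a := 0) (b := t)
  have hint :
      IntervalIntegrable (fun s => exp (-lam * (t - s)) * (t - s) ^ (-η)) volume 0 t := by
    simpa using ((intervalIntegrable_exp_mul_rpow_neg lam hη t).comp_sub_left t).symm
  rw [← hreflect, ← intervalIntegral.integral_const_mul]
  refine intervalIntegral.norm_integral_le_of_norm_le ht ?_ (hint.const_mul _)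
  filter_upwards [Measure.ae_ne volume t] with s hst hs
  have hWs := hW s t hs.1.le (lt_of_le_of_ne hs.2 hst)
  calc ‖W t s (f s)‖ ≤ ‖W t s‖ * ‖f s‖ := (W t s).le_opNorm _
    _ ≤ Ctil * exp (-lam * (t - s)) * (t - s) ^ (-η) * M :=
      mul_le_mul hWs (hf s ⟨hs.1.le, lt_of_le_of_ne hs.2 hst⟩) (norm_nonneg _)
        ((norm_nonneg _).trans hWs)
    _ = Ctil * M * (exp (-lam * (t - s)) * (t - s) ^ (-η)) := by ring

theorem map_add_integral_eq_of_comp_eq [CompleteSpace X] [CompleteSpace Y] {ι : Y →L[ℝ] X}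
    {U : ℝ → ℝ → X →L[ℝ] X} {W : ℝ → ℝ → X →L[ℝ] Y}
    (hWU : ∀ s t : ℝ, 0 ≤ s → s < t → ι.comp (W t s) = U t s) {t : ℝ} (ht : 0 < t)
    (x : X) {f : ℝ → X} (hf : IntervalIntegrable (fun s => W t s (f s)) volume 0 t) :
    ι (W t 0 x + ∫ s in (0:ℝ)..t, W t s (f s)) = U t 0 x + ∫ s in (0:ℝ)..t, U t s (f s) := by
  rw [map_add, ← ι.intervalIntegral_comp_comm hf, ← hWU 0 t le_rfl ht]
  congr 1
  refine intervalIntegral.integral_congr_ae ?_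
  filter_upwards [Measure.ae_ne volume t] with s hst hs
  rw [uIoc_of_le ht.le] at hs
  rw [← hWU s t hs.1.le (lt_of_le_of_ne hs.2 hst)]
  rfl

end

theorem stmt11_general
    {X Y : Type*} [NormedAddCommGroup X] [NormedSpace ℝ X] [CompleteSpace X]
    [NormedAddCommGroup Y] [NormedSpace ℝ Y] [CompleteSpace Y]
    (ι : Y →L[ℝ] X)
    (U : ℝ → ℝ → X →L[ℝ] X)
    (hUcont : ∀ x : X, ContinuousOn (fun p : ℝ × ℝ => U p.2 p.1 x)
      {p : ℝ × ℝ | 0 ≤ p.1 ∧ p.1 ≤ p.2})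
    (c lam : ℝ) (hc : 0 < c) (hlam : 0 < lam)
    (hU : ∀ s t : ℝ, 0 ≤ s → s ≤ t → ‖U t s‖ ≤ c * Real.exp (-lam * (t - s)))
    (W : ℝ → ℝ → X →L[ℝ] Y)
    (Ctil η : ℝ) (hCtil : 0 < Ctil) (hη1 : η < 1)
    (hWU : ∀ s t : ℝ, 0 ≤ s → s < t → ι.comp (W t s) = U t s)
    (hW : ∀ s t : ℝ, 0 ≤ s → s < t →
      ‖W t s‖ ≤ Ctil * Real.exp (-lam * (t - s)) * (t - s) ^ (-η))
    (F : X → X) (C_F : ℝ) (hCF : 0 < C_F)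
    (hF : ∀ x y : X, ‖F x - F y‖ ≤ C_F * ‖x - y‖)
    (hgap : c * C_F < lam)
    (g : ℝ → X)
    (u₀ v₀ : X) (u v : ℝ → X)
    (hu : ContinuousOn u (Set.Ici 0)) (hv : ContinuousOn v (Set.Ici 0))
    (hueq : ∀ t : ℝ, 0 ≤ t →
      u t = U t 0 u₀ + (∫ s in (0:ℝ)..t, U t s (F (u s))) + g t)
    (hveq : ∀ t : ℝ, 0 ≤ t →
      v t = U t 0 v₀ + (∫ s in (0:ℝ)..t, U t s (F (v s))) + g t)
    (ttil : ℝ) (httil : 0 < ttil)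
    (hWint : IntegrableOn (fun s => W ttil s (F (u s) - F (v s)))
      (Set.Icc 0 ttil)) :
    ι (W ttil 0 (u₀ - v₀) + ∫ s in (0:ℝ)..ttil, W ttil s (F (u s) - F (v s)))
        = u ttil - v ttil ∧
      ‖W ttil 0 (u₀ - v₀) + ∫ s in (0:ℝ)..ttil, W ttil s (F (u s) - F (v s))‖ ≤
        (Ctil * ttil ^ (-η) + C_F * Ctil * c * Real.exp (c * C_F / lam) *
          ∫ s in (0:ℝ)..ttil, Real.exp (-lam * s) * s ^ (-η)) * ‖u₀ - v₀‖ := by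
  have hWi : IntervalIntegrable (fun s => W ttil s (F (u s) - F (v s))) volume 0 ttil :=
    (intervalIntegrable_iff_integrableOn_Icc_of_le httil.le).2 hWint
  have hapriori : ∀ s, 0 ≤ s → ‖u s - v s‖ ≤ c * ‖u₀ - v₀‖ := fun s hs =>
    IsMildSolution.norm_sub_le hUcont hc.le hU hF hCF.le hgap.le hueq hveq hu hv hs
  have hinit : ‖W ttil 0 (u₀ - v₀)‖ ≤ Ctil * exp (-lam * ttil) * ttil ^ (-η) * ‖u₀ - v₀‖ :=
    (W ttil 0).le_of_opNorm_le (by simpa using hW 0 ttil le_rfl httil) _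
  have hduhamel := norm_integral_smoothing_le hW hη1 httil.le
    (M := C_F * (c * ‖u₀ - v₀‖)) fun s hs => (hF _ _).trans (by gcongr; exact hapriori s hs.1)
  have hI : 0 ≤ ∫ s in (0:ℝ)..ttil, exp (-lam * s) * s ^ (-η) :=
    intervalIntegral.integral_nonneg httil.le fun s hs => by have := hs.1; positivity
  refine ⟨?_, ?_⟩
  · rw [map_add_integral_eq_of_comp_eq hWU httil _ hWi, IsMildSolution.sub_eq hUcont hc.le
      hlam.le hU (continuous_of_norm_sub_le hF) hueq hveq hu hv httil.le]
  · calc _ ≤ _ := norm_add_le _ _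
      _ ≤ _ := add_le_add hinit hduhamel
      _ ≤ Ctil * 1 * ttil ^ (-η) * ‖u₀ - v₀‖ + Ctil * (C_F * (c * ‖u₀ - v₀‖)) *
            (∫ s in (0:ℝ)..ttil, exp (-lam * s) * s ^ (-η)) * exp (c * C_F / lam) := by
          refine add_le_add ?_
            (le_mul_of_one_le_right (by positivity) (one_le_exp (by positivity)))
          gcongr
          exact exp_le_one_iff.2 (by nlinarith)
      _ = _ := by ring

/-- the smoothing property (H₃) for the difference of two mild
solutions, measured in a compactly embedded space `Y`. -/
theorem stmt11
    {X Y : Type*} [NormedAddCommGroup X] [NormedSpace ℝ X] [CompleteSpace X]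
    [NormedAddCommGroup Y] [NormedSpace ℝ Y] [CompleteSpace Y]
    (ι : Y →L[ℝ] X) (hι : Function.Injective ι)
    (U : ℝ → ℝ → X →L[ℝ] X)
    (hUcont : ∀ x : X, ContinuousOn (fun p : ℝ × ℝ => U p.2 p.1 x)
      {p : ℝ × ℝ | 0 ≤ p.1 ∧ p.1 ≤ p.2})
    (c lam : ℝ) (hc : 0 < c) (hlam : 0 < lam)
    (hU : ∀ s t : ℝ, 0 ≤ s → s ≤ t → ‖U t s‖ ≤ c * Real.exp (-lam * (t - s)))
    (W : ℝ → ℝ → X →L[ℝ] Y)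
    (Ctil η : ℝ) (hCtil : 0 < Ctil) (hη : 0 < η) (hη1 : η < 1)
    (hWU : ∀ s t : ℝ, 0 ≤ s → s < t → ι.comp (W t s) = U t s)
    (hW : ∀ s t : ℝ, 0 ≤ s → s < t →
      ‖W t s‖ ≤ Ctil * Real.exp (-lam * (t - s)) * (t - s) ^ (-η))
    (F : X → X) (C_F : ℝ) (hCF : 0 < C_F)
    (hF : ∀ x y : X, ‖F x - F y‖ ≤ C_F * ‖x - y‖)
    (hgap : c * C_F < lam)
    (g : ℝ → X) (hg : ContinuousOn g (Set.Ici 0))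
    (u₀ v₀ : X) (u v : ℝ → X)
    (hu : ContinuousOn u (Set.Ici 0)) (hv : ContinuousOn v (Set.Ici 0))
    (hueq : ∀ t : ℝ, 0 ≤ t →
      u t = U t 0 u₀ + (∫ s in (0:ℝ)..t, U t s (F (u s))) + g t)
    (hveq : ∀ t : ℝ, 0 ≤ t →
      v t = U t 0 v₀ + (∫ s in (0:ℝ)..t, U t s (F (v s))) + g t)
    (ttil : ℝ) (httil : 0 < ttil)
    (hWint : IntegrableOn (fun s => W ttil s (F (u s) - F (v s)))
      (Set.Icc 0 ttil)) :
    ι (W ttil 0 (u₀ - v₀) + ∫ s in (0:ℝ)..ttil, W ttil s (F (u s) - F (v s)))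
        = u ttil - v ttil ∧
      ‖W ttil 0 (u₀ - v₀) + ∫ s in (0:ℝ)..ttil, W ttil s (F (u s) - F (v s))‖ ≤
        (Ctil * ttil ^ (-η) + C_F * Ctil * c * Real.exp (c * C_F / lam) *
          ∫ s in (0:ℝ)..ttil, Real.exp (-lam * s) * s ^ (-η)) * ‖u₀ - v₀‖ :=
  stmt11_general ι U hUcont c lam hc hlam hU W Ctil η hCtil hη1 hWU hW F C_F hCF hF hgap g u₀ v₀ u v
    hu hv hueq hveq ttil httil hWint
end
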